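/- The operators K_n preserve linear functions: K_n(t; x) = x for all x ≥ 1/2 and n ∈ ℕ. -/

import Mathlib

noncomputable section

/-- θ_k = 0 if k even, 1 if k odd. -/
def theta (k : ℕ) : ℝ := if Even k then 0 else 1

/-- Dunkl coefficients γ_μ(n). -/
def gammaD (mu : ℝ) (n : ℕ) : ℝ :=
  if Even n then
    2 ^ n * (Nat.factorial (n / 2)) * Real.Gamma ((n / 2 : ℕ) + mu + 1 / 2) / Real.Gamma (mu + 1 / 2)
  else
    2 ^ n * (Nat.factorial (n / 2)) * Real.Gamma ((n / 2 : ℕ) + mu + 3 / 2) / Real.Gamma (mu + 1 / 2)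

/-- Dunkl exponential e_μ(x) = Σ xⁿ/γ_μ(n). -/
def eD (mu x : ℝ) : ℝ := ∑' n : ℕ, x ^ n / gammaD mu n

/-- r_n(x) = x - 1/(2n). -/
def rn (n : ℕ) (x : ℝ) : ℝ := x - 1 / (2 * n)

/-- Modified Dunkl Szász–Mirakjan–Kantorovich operator K_n. -/
def Kn (mu : ℝ) (n : ℕ) (f : ℝ → ℝ) (x : ℝ) : ℝ :=
  (n / eD mu (n * rn n x)) * ∑' k : ℕ, (n * rn n x) ^ k / gammaD mu k *
    ∫ t in (((k : ℝ) + 2 * mu * theta k) / n)..(((k : ℝ) + 1 + 2 * mu * theta k) / n), f t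

/-- Stancu-type modified Dunkl Szász–Kantorovich operator K_n^*. -/
def KnStar (mu a b : ℝ) (n : ℕ) (f : ℝ → ℝ) (x : ℝ) : ℝ :=
  (n / eD mu (n * rn n x)) * ∑' k : ℕ, (n * rn n x) ^ k / gammaD mu k *
    ∫ t in (((k : ℝ) + 2 * mu * theta k) / n)..(((k : ℝ) + 1 + 2 * mu * theta k) / n),
      f ((n * t + a) / (n + b))

/-- Dunkl Szász–Kantorovich–Stancu operator T_n^*. -/
def TnStar (mu a b : ℝ) (n : ℕ) (f : ℝ → ℝ) (x : ℝ) : ℝ :=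
  (n / eD mu (n * x)) * ∑' k : ℕ, (n * x) ^ k / gammaD mu k *
    ∫ t in (((k : ℝ) + 2 * mu * theta k) / n)..(((k : ℝ) + 1 + 2 * mu * theta k) / n),
      f ((n * t + a) / (n + b))

/-- Modulus of continuity of f on [0,∞). -/
def modCont (f : ℝ → ℝ) (d : ℝ) : ℝ :=
  sSup {y | ∃ t s : ℝ, 0 ≤ t ∧ 0 ≤ s ∧ |t - s| ≤ d ∧ y = |f t - f s|}

/-!
Write `a_k = k + 2μθ_k` and `y = n r_n(x) = n x - 1/2`. The Dunkl coefficients satisfy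
`γ_μ(k+1) = a_{k+1} γ_μ(k)`, so the series `Σ a_k y^k/γ_μ(k)` is the shift of `y e_μ(y)`.
Since `∫_{a_k/n}^{(a_k+1)/n} t dt = (2a_k + 1)/(2n²)`, the series in `K_n(t; x)` sums to
`(y + 1/2) e_μ(y)/n² = x e_μ(y)/n`, and `e_μ(y) ≥ 1` because `y ≥ 0`.
-/

lemma natCast_lt_add_one_add_two_mul_mul_theta {mu : ℝ} (hmu : -1 / 2 < mu) (k : ℕ) :
    (k : ℝ) < k + 1 + 2 * mu * theta (k + 1) := by
  unfold theta; split <;> linarith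

lemma gammaD_pos {mu : ℝ} (hmu : -1 / 2 < mu) (k : ℕ) : 0 < gammaD mu k := by
  have hk : (0 : ℝ) ≤ (k / 2 : ℕ) := Nat.cast_nonneg _
  have hΓ : 0 < Real.Gamma (mu + 1 / 2) := Real.Gamma_pos_of_pos (by linarith)
  unfold gammaD
  split
  · have := Real.Gamma_pos_of_pos (show (0 : ℝ) < (k / 2 : ℕ) + mu + 1 / 2 by linarith)
    positivity
  · have := Real.Gamma_pos_of_pos (show (0 : ℝ) < (k / 2 : ℕ) + mu + 3 / 2 by linarith)
    positivity

lemma gammaD_zero {mu : ℝ} (hmu : -1 / 2 < mu) : gammaD mu 0 = 1 := by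
  have hΓ : Real.Gamma (mu + 1 / 2) ≠ 0 := (Real.Gamma_pos_of_pos (by linarith)).ne'
  simp only [gammaD, if_pos Even.zero, Nat.zero_div, pow_zero, Nat.factorial_zero,
    Nat.cast_one, Nat.cast_zero, zero_add, one_mul]
  exact div_self hΓ

lemma gammaD_succ {mu : ℝ} (hmu : -1 / 2 < mu) (k : ℕ) :
    gammaD mu (k + 1) = (k + 1 + 2 * mu * theta (k + 1)) * gammaD mu k := by
  rcases Nat.even_or_odd k with ⟨m, rfl⟩ | ⟨m, rfl⟩
  · have ho : ¬ Even (m + m + 1) := Nat.not_even_iff_odd.mpr ⟨m, by ring⟩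
    have hΓ : Real.Gamma (m + mu + 3 / 2) = (m + mu + 1 / 2) * Real.Gamma (m + mu + 1 / 2) := by
      rw [← Real.Gamma_add_one (by linarith [(Nat.cast_nonneg m : (0 : ℝ) ≤ m)])]
      ring_nf
    rw [gammaD, gammaD, theta, if_neg ho, if_neg ho, if_pos ⟨m, rfl⟩,
      show (m + m + 1) / 2 = m by omega, show (m + m) / 2 = m by omega, hΓ]
    push_cast
    ring
  · have he : Even (2 * m + 1 + 1) := ⟨m + 1, by ring⟩
    have ho : ¬ Even (2 * m + 1) := Nat.not_even_iff_odd.mpr ⟨m, rfl⟩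
    rw [gammaD, gammaD, theta, if_pos he, if_pos he, if_neg ho,
      show (2 * m + 1 + 1) / 2 = m + 1 by omega, show (2 * m + 1) / 2 = m by omega,
      Nat.factorial_succ]
    push_cast
    ring_nf

lemma summable_pow_div_gammaD {mu : ℝ} (hmu : -1 / 2 < mu) (y : ℝ) :
    Summable fun k : ℕ => y ^ k / gammaD mu k := by
  refine summable_of_ratio_norm_eventually_le (r := 1 / 2) (by norm_num) ?_
  filter_upwards [Filter.eventually_ge_atTop ⌈2 * |y|⌉₊] with k hk
  have hky : 2 * |y| ≤ k := Nat.ceil_le.mp hk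
  have hk0 : 0 < (k : ℝ) + 1 + 2 * mu * theta (k + 1) := by
    linarith [natCast_lt_add_one_add_two_mul_mul_theta hmu k, abs_nonneg y]
  have hratio : y ^ (k + 1) / gammaD mu (k + 1)
      = y / (k + 1 + 2 * mu * theta (k + 1)) * (y ^ k / gammaD mu k) := by
    have := (gammaD_pos hmu k).ne'
    rw [gammaD_succ hmu k, pow_succ]
    field_simp
  rw [hratio, norm_mul]
  refine mul_le_mul_of_nonneg_right ?_ (norm_nonneg _)
  rw [norm_div, Real.norm_eq_abs, Real.norm_eq_abs, abs_of_pos hk0, div_le_iff₀ hk0]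
  linarith [natCast_lt_add_one_add_two_mul_mul_theta hmu k]

lemma hasSum_eD {mu : ℝ} (hmu : -1 / 2 < mu) (y : ℝ) :
    HasSum (fun k : ℕ => y ^ k / gammaD mu k) (eD mu y) :=
  (summable_pow_div_gammaD hmu y).hasSum

lemma one_le_eD {mu : ℝ} (hmu : -1 / 2 < mu) {y : ℝ} (hy : 0 ≤ y) : 1 ≤ eD mu y := by
  simpa [gammaD_zero hmu] using le_hasSum (hasSum_eD hmu y) 0 fun k _ =>
    div_nonneg (pow_nonneg hy k) (gammaD_pos hmu k).le

lemma hasSum_mul_pow_div_gammaD {mu : ℝ} (hmu : -1 / 2 < mu) (y : ℝ) :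
    HasSum (fun k : ℕ => (k + 2 * mu * theta k) * (y ^ k / gammaD mu k)) (y * eD mu y) := by
  have hshift : ∀ k : ℕ, ((k + 1 : ℕ) + 2 * mu * theta (k + 1)) * (y ^ (k + 1) / gammaD mu (k + 1))
      = y * (y ^ k / gammaD mu k) := by
    intro k
    have hγ := (gammaD_pos hmu k).ne'
    have ha : (k : ℝ) + 1 + 2 * mu * theta (k + 1) ≠ 0 :=
      ((Nat.cast_nonneg k).trans_lt (natCast_lt_add_one_add_two_mul_mul_theta hmu k)).ne'
    rw [gammaD_succ hmu k, pow_succ]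
    push_cast
    field_simp
  have htail := (hasSum_eD hmu y).mul_left y
  simp only [← hshift] at htail
  simpa [theta] using HasSum.zero_add
    (f := fun k : ℕ => ((k : ℝ) + 2 * mu * theta k) * (y ^ k / gammaD mu k)) htail

lemma integral_id_div (a : ℝ) (n : ℕ) : ∫ t in a / n..(a + 1) / n, t = (2 * a + 1) / (2 * n ^ 2) := by
  rw [integral_id]
  ring

lemma hasSum_pow_div_gammaD_mul_integral_id {mu : ℝ} (hmu : -1 / 2 < mu) (n : ℕ) (y : ℝ) :
    HasSum (fun k : ℕ => y ^ k / gammaD mu k *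
        ∫ t in ((k : ℝ) + 2 * mu * theta k) / n..((k : ℝ) + 1 + 2 * mu * theta k) / n, t)
      ((y + 1 / 2) * eD mu y / n ^ 2) := by
  have hterm : ∀ k : ℕ, y ^ k / gammaD mu k *
      ∫ t in ((k : ℝ) + 2 * mu * theta k) / n..((k : ℝ) + 1 + 2 * mu * theta k) / n, t
      = 1 / (n : ℝ) ^ 2 * ((k + 2 * mu * theta k) * (y ^ k / gammaD mu k))
        + 1 / (2 * (n : ℝ) ^ 2) * (y ^ k / gammaD mu k) := by
    intro k
    rw [add_right_comm, integral_id_div]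
    ring
  rw [funext hterm, show (y + 1 / 2) * eD mu y / n ^ 2
    = 1 / (n : ℝ) ^ 2 * (y * eD mu y) + 1 / (2 * (n : ℝ) ^ 2) * eD mu y by ring]
  exact ((hasSum_mul_pow_div_gammaD hmu y).mul_left _).add ((hasSum_eD hmu y).mul_left _)

theorem Kn_id (mu : ℝ) (hmu : 0 ≤ mu) (n : ℕ) (hn : 0 < n) (x : ℝ) (hx : 1 / 2 ≤ x) :
    Kn mu n (fun t => t) x = x := by
  have hn' : (n : ℝ) ≠ 0 := by positivity
  have hy : n * rn n x = n * x - 1 / 2 := by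
    unfold rn
    field_simp
  have hE : eD mu (n * rn n x) ≠ 0 := by
    refine (zero_lt_one.trans_le (one_le_eD (by linarith) ?_)).ne'
    rw [hy]
    nlinarith [(Nat.one_le_cast.mpr hn : (1 : ℝ) ≤ n)]
  rw [Kn, (hasSum_pow_div_gammaD_mul_integral_id (by linarith) n _).tsum_eq]
  field_simp
  rw [hy]
  ring
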